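/- Let P be a v×v real orthogonal projection matrix (symmetric and idempotent), and let Q be a v×s real matrix whose column space equals the range of P. Then the matrix I_v − P + Q Qᵀ is symmetric positive definite, and its inverse is given by (I_v − P + Q Qᵀ)^{−1} = I_v − P + (Q Qᵀ)⁺. -/

import Mathlib

open Matrix

/-- The column space of a real matrix. -/
def colSpace {m n : ℕ} (A : Matrix (Fin m) (Fin n) ℝ) : Submodule ℝ (Fin m → ℝ) :=
  LinearMap.range A.mulVecLin

/-- `B` is the Moore–Penrose pseudoinverse of `A`. -/
def IsMPInv {m n : ℕ} (A : Matrix (Fin m) (Fin n) ℝ) (B : Matrix (Fin n) (Fin m) ℝ) : Prop :=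
  A * B * A = A ∧ B * A * B = B ∧ (A * B)ᵀ = A * B ∧ (B * A)ᵀ = B * A

/-!
`G = QQᵀ` has the same column space as `Q`, hence as `P`. For the Moore–Penrose inverse `G⁺`,
both `GG⁺` and `G⁺G` are orthogonal projectors onto the column space of `G`, and an orthogonal
projector is determined by its range; so `GG⁺ = G⁺G = P`. With `GP = G` and `PG⁺ = G⁺G G⁺ = G⁺`
this makes `(I - P + G)(I - P + G⁺) = I`. Finally `I - P + G` is a sum of the positive
semidefinite matrices `(I - P)ᵀ(I - P)` and `QQᵀ`, and an invertible positive semidefinite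
matrix is positive definite.
-/

def IsOrthProj {n : Type*} [Fintype n] (E : Matrix n n ℝ) : Prop :=
  Eᵀ = E ∧ E * E = E

namespace IsOrthProj

variable {n : Type*} [Fintype n] {E : Matrix n n ℝ}

theorem one_sub [DecidableEq n] (hE : IsOrthProj E) : IsOrthProj (1 - E) := by
  refine ⟨by rw [transpose_sub, transpose_one, hE.1], ?_⟩
  simp only [sub_mul, mul_sub, one_mul, mul_one, hE.2, sub_self, sub_zero]

theorem posSemidef (hE : IsOrthProj E) : E.PosSemidef := by
  have h := posSemidef_conjTranspose_mul_self E
  rwa [conjTranspose_eq_transpose_of_trivial, hE.1, hE.2] at h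

end IsOrthProj

section ColSpace

variable {m n k : ℕ}

theorem colSpace_mul_le (A : Matrix (Fin m) (Fin n) ℝ) (B : Matrix (Fin n) (Fin k) ℝ) :
    colSpace (A * B) ≤ colSpace A := by
  rw [colSpace, mulVecLin_mul]
  exact LinearMap.range_comp_le_range _ _

theorem colSpace_mul_transpose_self (A : Matrix (Fin m) (Fin n) ℝ) :
    colSpace (A * Aᵀ) = colSpace A :=
  Submodule.eq_of_le_of_finrank_eq (colSpace_mul_le A Aᵀ) (rank_self_mul_transpose A)

theorem mul_eq_self_of_colSpace_le {E : Matrix (Fin m) (Fin m) ℝ} (hE : E * E = E)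
    {A : Matrix (Fin m) (Fin n) ℝ} (h : colSpace A ≤ colSpace E) : E * A = A := by
  have hker : colSpace E ≤ LinearMap.ker (1 - E).mulVecLin := by
    rw [colSpace, LinearMap.range_le_ker_iff, ← mulVecLin_mul, sub_mul, hE, one_mul, sub_self,
      mulVecLin_zero]
  have hzero : (1 - E) * A = 0 := by
    rw [← toLin'.map_eq_zero_iff, toLin'_apply', mulVecLin_mul, ← LinearMap.range_le_ker_iff]
    exact h.trans hker
  rw [Matrix.sub_mul, Matrix.one_mul, sub_eq_zero] at hzero
  exact hzero.symm

theorem IsOrthProj.eq_of_colSpace_eq {E F : Matrix (Fin m) (Fin m) ℝ} (hE : IsOrthProj E)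
    (hF : IsOrthProj F) (h : colSpace E = colSpace F) : E = F := by
  have hEF : E * F = F := mul_eq_self_of_colSpace_le hE.2 h.ge
  have hFE : F * E = E := mul_eq_self_of_colSpace_le hF.2 h.le
  calc E = (F * E)ᵀ := by rw [hFE, hE.1]
    _ = E * F := by rw [transpose_mul, hE.1, hF.1]
    _ = F := hEF

end ColSpace

namespace IsMPInv

variable {m n : ℕ} {A : Matrix (Fin m) (Fin n) ℝ} {B : Matrix (Fin n) (Fin m) ℝ}

theorem transpose (h : IsMPInv A B) : IsMPInv Aᵀ Bᵀ := by
  obtain ⟨h1, h2, h3, h4⟩ := h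
  refine ⟨?_, ?_, ?_, ?_⟩
  · rw [← transpose_mul, ← transpose_mul, ← Matrix.mul_assoc, h1]
  · rw [← transpose_mul, ← transpose_mul, ← Matrix.mul_assoc, h2]
  · rw [← transpose_mul, transpose_transpose, h4]
  · rw [← transpose_mul, transpose_transpose, h3]

theorem isOrthProj_mul (h : IsMPInv A B) : IsOrthProj (A * B) :=
  ⟨h.2.2.1, by rw [← Matrix.mul_assoc, h.1]⟩

theorem colSpace_mul (h : IsMPInv A B) : colSpace (A * B) = colSpace A :=
  le_antisymm (colSpace_mul_le A B) <|
    calc colSpace A = colSpace (A * B * A) := by rw [h.1]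
      _ ≤ colSpace (A * B) := colSpace_mul_le _ _

end IsMPInv

theorem stmt15 (v s : ℕ) (P : Matrix (Fin v) (Fin v) ℝ)
    (hPsymm : Pᵀ = P) (hPidem : P * P = P)
    (Q : Matrix (Fin v) (Fin s) ℝ) (hQrange : colSpace Q = colSpace P)
    (Wp : Matrix (Fin v) (Fin v) ℝ) (hWp : IsMPInv (Q * Qᵀ) Wp) :
    (1 - P + Q * Qᵀ).PosDef ∧ (1 - P + Q * Qᵀ)⁻¹ = 1 - P + Wp := by
  set G := Q * Qᵀ
  have hP : IsOrthProj P := ⟨hPsymm, hPidem⟩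
  have hGsymm : Gᵀ = G := by rw [transpose_mul, transpose_transpose]
  have hG : colSpace G = colSpace P := (colSpace_mul_transpose_self Q).trans hQrange
  have hGWp : G * Wp = P := hWp.isOrthProj_mul.eq_of_colSpace_eq hP (hWp.colSpace_mul.trans hG)
  have hWpG : Wp * G = P := by
    have h := hWp.transpose.isOrthProj_mul.eq_of_colSpace_eq hP
      (by rw [hWp.transpose.colSpace_mul, hGsymm, hG])
    rwa [← transpose_mul, ← hPsymm, transpose_inj] at h
  have hGP : G * P = G :=
    calc G * P = (P * G)ᵀ := by rw [transpose_mul, hGsymm, hPsymm]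
      _ = G := by rw [mul_eq_self_of_colSpace_le hPidem hG.le, hGsymm]
  have hPWp : P * Wp = Wp := by rw [← hWpG, hWp.2.1]
  have hright : (1 - P + G) * (1 - P + Wp) = 1 := by
    simp only [add_mul, mul_add, sub_mul, mul_sub, one_mul, mul_one, hPidem, hGP, hGWp, hPWp]
    abel
  refine ⟨?_, inv_eq_right_inv hright⟩
  have hpsd := hP.one_sub.posSemidef.add (posSemidef_self_mul_conjTranspose Q)
  rw [conjTranspose_eq_transpose_of_trivial] at hpsd
  exact hpsd.posDef_iff_isUnit.mpr (IsUnit.of_mul_eq_one _ hright)
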